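/- arXiv:2405.01685 — 2 statements merged into one kernel-verified Lean document; each statement's English description precedes it below -/
import Mathlib

section
/- Let V̂ : [0,∞) × ℝ → ℝ with V̂ ≤ M̂ for a function M̂ : [0,∞) → ℝ, let b₀, b₁ : ℝ → [0,∞] be defined by b₀(x) = sup{φ ∈ [0, b/a) : V̂(φ,x) = M̂(φ)} and b₁(x) = inf{φ ∈ (b/a, ∞] : V̂(φ,x) = M̂(φ)} (with conventions sup ∅ = 0, inf ∅ = ∞). If for every φ the map x ↦ V̂(φ,x) is increasing, and the sets {φ < b/a : V̂(φ,x)=M̂(φ)} and {φ > b/a : V̂(φ,x)=M̂(φ)} are downward respectively upward closed in φ for each x, then x ↦ b₀(x) is increasing and x ↦ b₁(x) is decreasing. -/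
open scoped ENNReal

theorem Monotone.monotone_eq_of_le {α β : Type*} [Preorder α] [PartialOrder β] {f : α → β}
    {m : β} (hf : Monotone f) (hle : ∀ x, f x ≤ m) : Monotone fun x => f x = m :=
  fun _ _ hxy h => le_antisymm (hle _) (h ▸ hf hxy)

theorem stmt1_general (V : ℝ → ℝ → ℝ) (M : ℝ → ℝ) (a b : ℝ)
    (hle : ∀ φ x, 0 ≤ φ → V φ x ≤ M φ)
    (b0 b1 : ℝ → ℝ≥0∞)
    (hb0 : ∀ x, b0 x =
      sSup {φ : ℝ≥0∞ | φ < ENNReal.ofReal (b / a) ∧ V φ.toReal x = M φ.toReal})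
    (hb1 : ∀ x, b1 x =
      sInf {φ : ℝ≥0∞ | ENNReal.ofReal (b / a) < φ ∧ φ ≠ ⊤ ∧ V φ.toReal x = M φ.toReal})
    (hmono : ∀ φ, 0 ≤ φ → Monotone (fun x => V φ x)) :
    Monotone b0 ∧ Antitone b1 := by
  -- The stopping set `{φ | V φ x = M φ}` grows with `x`, so its supremum grows and its infimum shrinks.
  have hstop (φ : ℝ≥0∞) : Monotone fun x => V φ.toReal x = M φ.toReal :=
    (hmono _ ENNReal.toReal_nonneg).monotone_eq_of_le fun x => hle _ x ENNReal.toReal_nonneg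
  refine ⟨fun x y hxy => ?_, fun x y hxy => ?_⟩
  · rw [hb0, hb0]
    exact sSup_le_sSup fun φ ⟨hφ, hx⟩ => ⟨hφ, hstop φ hxy hx⟩
  · rw [hb1, hb1]
    exact sInf_le_sInf fun φ ⟨hφ, hfin, hx⟩ => ⟨hφ, hfin, hstop φ hxy hx⟩

/-- monotonicity of the optimal stopping boundaries
`b₀(x) = sup{φ ∈ [0,b/a) : V(φ,x) = M(φ)}` (with `sup ∅ = 0`) and
`b₁(x) = inf{φ ∈ (b/a,∞] : V(φ,x) = M(φ)}` (with `inf ∅ = ∞`),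
given that `x ↦ V(φ,x)` is increasing and the stopping sets are
downward/upward closed in `φ` below/above `b/a`. -/
theorem stmt1 (V : ℝ → ℝ → ℝ) (M : ℝ → ℝ) (a b : ℝ) (ha : 0 < a) (hb : 0 < b)
    (hle : ∀ φ x, 0 ≤ φ → V φ x ≤ M φ)
    (b0 b1 : ℝ → ℝ≥0∞)
    (hb0 : ∀ x, b0 x =
      sSup {φ : ℝ≥0∞ | φ < ENNReal.ofReal (b / a) ∧ V φ.toReal x = M φ.toReal})
    (hb1 : ∀ x, b1 x =
      sInf {φ : ℝ≥0∞ | ENNReal.ofReal (b / a) < φ ∧ φ ≠ ⊤ ∧ V φ.toReal x = M φ.toReal})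
    (hmono : ∀ φ, 0 ≤ φ → Monotone (fun x => V φ x))
    (hdown : ∀ x φ ψ, 0 ≤ ψ → ψ ≤ φ → φ < b / a → V φ x = M φ → V ψ x = M ψ)
    (hup : ∀ x φ ψ, b / a < φ → φ ≤ ψ → V φ x = M φ → V ψ x = M ψ) :
    Monotone b0 ∧ Antitone b1 :=
  stmt1_general V M a b hle b0 b1 hb0 hb1 hmono
end

section
/- Let U : C → ℝ be a function on a set C, let (Ω, 𝓕, ℙ) be a probability space with a stopping time ν and a localising sequence τ_n ↑ ∞, r > 0, and processes such that for all n: U(φ,x) = E[e^{−r(ν∧τ_n)} U(Y_{ν∧τ_n})] + E[∫₀^{ν∧τ_n} e^{−rt} H(Y_t) dt], where Y is a process with Y₀ = (φ,x), H ≤ 0, U bounded, ν < ∞ a.s., U(Y_ν) = 0 a.s., and U(Y_t) ≥ 0 for t ∈ [0,ν]. Then U(φ,x) ≤ 0. -/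
/-!
Since `H ≤ 0`, the running-reward term of the representation is nonpositive, so `U(φ,x)` is at
most the expected discounted stopped value `E[e^{-r(ν∧τₙ)} U(Y_{ν∧τₙ})]` for every `n`. Pathwise
this equals `e^{-rν} U(Y_ν)` as soon as `τₙ ≥ ν`, and it is bounded by `sup |U|` because `r ≥ 0`,
so by dominated convergence the bounds tend to `E[e^{-rν} U(Y_ν)] = 0`.
-/

open MeasureTheory Filter Topology

lemma intervalIntegral_nonpos_of_nonpos {g : ℝ → ℝ} {a b : ℝ} (hab : a ≤ b)
    (hg : ∀ s, g s ≤ 0) : ∫ s in a..b, g s ≤ 0 := by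
  rw [intervalIntegral.integral_of_le hab]
  exact integral_nonpos fun s => hg s

lemma abs_exp_neg_mul_mul_le {r t u C : ℝ} (hr : 0 ≤ r) (ht : 0 ≤ t) (hu : |u| ≤ C) :
    |Real.exp (-(r * t)) * u| ≤ C := by
  have hexp : Real.exp (-(r * t)) ≤ 1 := Real.exp_le_one_iff.2 (by nlinarith)
  rw [abs_mul, abs_of_pos (Real.exp_pos _)]
  nlinarith [abs_nonneg u, Real.exp_pos (-(r * t))]

lemma tendsto_comp_min_of_tendsto_atTop {α : Type*} [TopologicalSpace α] (F : ℝ → α)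
    {τ : ℕ → ℝ} (hτ : Tendsto τ atTop atTop) (a : ℝ) :
    Tendsto (fun n => F (min a (τ n))) atTop (𝓝 (F a)) :=
  tendsto_const_nhds.congr' <|
    (hτ.eventually_ge_atTop a).mono fun n h => by simp only [min_eq_left h]

lemma le_integral_of_tendsto_of_le_integral {Ω : Type*} [MeasurableSpace Ω] {P : Measure Ω}
    [IsFiniteMeasure P] {f : ℕ → Ω → ℝ} {g : Ω → ℝ} {a C : ℝ} (ha : 0 < a)
    (hle : ∀ n, a ≤ ∫ ω, f n ω ∂P) (hbdd : ∀ n ω, |f n ω| ≤ C)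
    (hlim : ∀ᵐ ω ∂P, Tendsto (fun n => f n ω) atTop (𝓝 (g ω))) :
    a ≤ ∫ ω, g ω ∂P := by
  -- no measurability is assumed: `∫ f n ≠ 0` is what makes `f n` integrable
  have hint (n : ℕ) : Integrable (f n) P :=
    .of_integral_ne_zero (ha.trans_le (hle n)).ne'
  exact ge_of_tendsto (tendsto_integral_of_dominated_convergence (fun _ => C)
    (fun n => (hint n).aestronglyMeasurable) (integrable_const C)
    (fun n => .of_forall (hbdd n)) hlim) (.of_forall hle)

theorem stmt14_general {Ω : Type*} [MeasurableSpace Ω] (P : Measure Ω)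
    [IsProbabilityMeasure P]
    (U H : ℝ × ℝ → ℝ) (Y : ℝ → Ω → ℝ × ℝ) (ν : Ω → ℝ) (τ : ℕ → Ω → ℝ)
    (r : ℝ) (hr : 0 < r) (φ x : ℝ)
    (hν_nonneg : ∀ ω, 0 ≤ ν ω)
    (hτ_nonneg : ∀ n ω, 0 ≤ τ n ω)
    (hτ_top : ∀ ω, Tendsto (fun n => τ n ω) atTop atTop)
    (hH : ∀ p, H p ≤ 0)
    (hUbdd : ∃ C, ∀ p, |U p| ≤ C)
    (hrepr : ∀ n, U (φ, x) =
      (∫ ω, Real.exp (-(r * min (ν ω) (τ n ω))) * U (Y (min (ν ω) (τ n ω)) ω) ∂P)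
      + ∫ ω, (∫ t in (0 : ℝ)..(min (ν ω) (τ n ω)), Real.exp (-(r * t)) * H (Y t ω)) ∂P)
    (hUν : ∀ᵐ ω ∂P, U (Y (ν ω) ω) = 0) :
    U (φ, x) ≤ 0 := by
  obtain ⟨C, hC⟩ := hUbdd
  have hstopped (n : ℕ) : U (φ, x) ≤
      ∫ ω, Real.exp (-(r * min (ν ω) (τ n ω))) * U (Y (min (ν ω) (τ n ω)) ω) ∂P := by
    have hrunning : ∫ ω, (∫ t in (0 : ℝ)..(min (ν ω) (τ n ω)),
        Real.exp (-(r * t)) * H (Y t ω)) ∂P ≤ 0 :=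
      integral_nonpos fun ω => intervalIntegral_nonpos_of_nonpos
        (le_min (hν_nonneg ω) (hτ_nonneg n ω))
        fun t => mul_nonpos_of_nonneg_of_nonpos (Real.exp_pos _).le (hH _)
    linarith [hrepr n]
  have hterminal : ∫ ω, Real.exp (-(r * ν ω)) * U (Y (ν ω) ω) ∂P = 0 :=
    integral_eq_zero_of_ae (hUν.mono fun ω h => by simp [h])
  by_contra! hpos
  have := le_integral_of_tendsto_of_le_integral hpos hstopped
    (fun n ω => abs_exp_neg_mul_mul_le hr.le (le_min (hν_nonneg ω) (hτ_nonneg n ω)) (hC _))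
    (.of_forall fun ω => tendsto_comp_min_of_tendsto_atTop
      (fun s => Real.exp (-(r * s)) * U (Y s ω)) (hτ_top ω) (ν ω))
  linarith

/-- abstract stochastic maximum principle argument
(5.41)–(5.43): from the Itô/Dynkin representation of `U` along a
localising sequence, with `H ≤ 0`, `U` bounded, `r > 0`, `U(Y_ν) = 0` and
`U(Y_t) ≥ 0` on `[0,ν]`, it follows that `U(φ,x) ≤ 0`. -/
theorem stmt14 {Ω : Type*} [MeasurableSpace Ω] (P : Measure Ω)
    [IsProbabilityMeasure P]
    (U H : ℝ × ℝ → ℝ) (Y : ℝ → Ω → ℝ × ℝ) (ν : Ω → ℝ) (τ : ℕ → Ω → ℝ)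
    (r : ℝ) (hr : 0 < r) (φ x : ℝ)
    (hY0 : ∀ ω, Y 0 ω = (φ, x))
    (hν_nonneg : ∀ ω, 0 ≤ ν ω)
    (hτ_nonneg : ∀ n ω, 0 ≤ τ n ω)
    (hτ_mono : ∀ ω, Monotone (fun n => τ n ω))
    (hτ_top : ∀ ω, Tendsto (fun n => τ n ω) atTop atTop)
    (hH : ∀ p, H p ≤ 0)
    (hUbdd : ∃ C, ∀ p, |U p| ≤ C)
    (hrepr : ∀ n, U (φ, x) =
      (∫ ω, Real.exp (-(r * min (ν ω) (τ n ω))) * U (Y (min (ν ω) (τ n ω)) ω) ∂P)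
      + ∫ ω, (∫ t in (0 : ℝ)..(min (ν ω) (τ n ω)), Real.exp (-(r * t)) * H (Y t ω)) ∂P)
    (hUν : ∀ᵐ ω ∂P, U (Y (ν ω) ω) = 0)
    (hUnonneg : ∀ᵐ ω ∂P, ∀ t ∈ Set.Icc 0 (ν ω), 0 ≤ U (Y t ω)) :
    U (φ, x) ≤ 0 :=
  stmt14_general P U H Y ν τ r hr φ x hν_nonneg hτ_nonneg hτ_top hH hUbdd hrepr hUν
end
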